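/- arXiv:math/0512313 — 2 statements merged into one kernel-verified Lean document; each statement's English description precedes it below -/
import Mathlib

section
/- Let r > p > 1, define v by 1/v = 1/p − 1/r, let 0 < δ < 1/v, and let m(t) = t^{−1/v+δ} for t ∈ (0,1], so that m'(t) = (−1/v+δ) t^{−1/v+δ−1}. Then m ∈ L^v(0,1] and Σ_{n=1}^∞ (2^{−n/r'} ‖m'·χ_{(2^{−n},2^{−n+1}]}‖_p)^p < ∞; consequently, for every g ∈ AC_r the product mg (extended by (mg)(0) = 0) belongs to AC_p, i.e., m defines a multiplier from AC_r to AC_p even though m is unbounded. -/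
/-!
Write `α = -1/v + δ`, so that `-1/v < α < 0`; then `αv > -1` gives `t^α ∈ L^v`. On a
dyadic block `(a, 2a]` one has `|m'| ≤ |α| a^(α-1)`, so with `a = 2^(-(n+1))` the `n`-th term
of the series is at most `(|α| a^(1/r' + α - 1 + 1/p))^p = |α|^p 2^(-(n+1)δp)`: the series is
dominated by a geometric one.

For `g ∈ AC_r`, Hölder's inequality gives `|g(u)| ≤ ‖g'‖_r u^(1/r')`, hence
`|m' g| ≲ u^(δ - 1/p)`, which lies in `L^p`; and `m g' ∈ L^p` by Hölder with
`1/p = 1/v + 1/r`. Finally `∫_0^t (m' g + m g') = m(t) g(t)`: substituting `g(u) = ∫_0^u g'`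
into `∫_0^t m' g` and exchanging the order of integration turns it into
`∫_0^t (m(t) - m(s)) g'(s) ds`.
-/

open MeasureTheory Set
open scoped ENNReal

/-- The Lebesgue measure restricted to `[0,1]`. -/
noncomputable def mu01 : Measure ℝ := volume.restrict (Set.Icc (0 : ℝ) 1)

instance isFiniteMeasure_mu01 : IsFiniteMeasure mu01 := by
  rw [mu01]; infer_instance

lemma mu01_eq_restrict_Ioc : mu01 = volume.restrict (Ioc 0 1) :=
  Measure.restrict_congr_set Ioc_ae_eq_Icc.symm

lemma integrableOn_Ioc_rpow {β : ℝ} (hβ : -1 < β) :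
    IntegrableOn (fun t : ℝ => t ^ β) (Ioc 0 1) :=
  (intervalIntegrable_iff_integrableOn_Ioc_of_le zero_le_one).1
    (intervalIntegral.intervalIntegrable_rpow' hβ)

lemma memLp_ofReal_rpow {β q : ℝ} (hq : 0 < q) (hβq : -1 < β * q) :
    MemLp (fun t : ℝ => ((t ^ β : ℝ) : ℂ)) (ENNReal.ofReal q) mu01 := by
  have hq0 : ENNReal.ofReal q ≠ 0 := by simpa using hq
  refine (memLp_norm_rpow_iff (by fun_prop) hq0 ENNReal.ofReal_ne_top).1 ?_
  rw [ENNReal.div_self hq0 ENNReal.ofReal_ne_top, memLp_one_iff_integrable,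
    ENNReal.toReal_ofReal hq.le, mu01_eq_restrict_Ioc]
  refine (integrableOn_Ioc_rpow hβq).congr_fun (fun t ht => ?_) measurableSet_Ioc
  rw [Complex.norm_real, Real.norm_of_nonneg (Real.rpow_nonneg ht.1.le _),
    ← Real.rpow_mul ht.1.le]

lemma memLp_of_norm_le_rpow {E : Type*} [NormedAddCommGroup E] {f : ℝ → E} {β q C : ℝ}
    (hq : 0 < q) (hβq : -1 < β * q) (hf : AEStronglyMeasurable f mu01)
    (hbound : ∀ t ∈ Ioc (0 : ℝ) 1, ‖f t‖ ≤ C * t ^ β) :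
    MemLp f (ENNReal.ofReal q) mu01 := by
  refine ((memLp_ofReal_rpow hq hβq).const_mul (C : ℂ)).of_le hf ?_
  rw [mu01_eq_restrict_Ioc]
  refine (ae_restrict_iff' measurableSet_Ioc).2 (.of_forall fun t ht => ?_)
  calc ‖f t‖ ≤ C * t ^ β := hbound t ht
    _ ≤ ‖(C : ℂ) * ((t ^ β : ℝ) : ℂ)‖ := by
      rw [← Complex.ofReal_mul, Complex.norm_real]; exact Real.le_norm_self _

lemma eLpNorm_indicator_Ioc_le {E : Type*} [NormedAddCommGroup E] {f : ℝ → E} {a b C p : ℝ}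
    (hp : 0 < p) (hf : ∀ t ∈ Ioc a b, ‖f t‖ ≤ C) :
    eLpNorm ((Ioc a b).indicator f) (ENNReal.ofReal p) mu01 ≤
      ENNReal.ofReal (b - a) ^ p⁻¹ * ENNReal.ofReal C := by
  rw [eLpNorm_indicator_eq_eLpNorm_restrict measurableSet_Ioc]
  refine (eLpNorm_le_of_ae_bound
    ((ae_restrict_iff' measurableSet_Ioc).2 (.of_forall hf))).trans ?_
  rw [ENNReal.toReal_ofReal hp.le, Measure.restrict_apply_univ, ← Real.volume_Ioc]
  gcongr
  exact Measure.restrict_le_self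

lemma eLpNorm_indicator_deriv_rpow_le {α a b p : ℝ} (hα : α ≤ 1) (ha : 0 < a) (hp : 0 < p) :
    eLpNorm ((Ioc a b).indicator fun t : ℝ => ((α * t ^ (α - 1) : ℝ) : ℂ))
        (ENNReal.ofReal p) mu01 ≤
      ENNReal.ofReal (b - a) ^ p⁻¹ * ENNReal.ofReal (|α| * a ^ (α - 1)) :=
  eLpNorm_indicator_Ioc_le hp fun t ht => by
    rw [Complex.norm_real, Real.norm_eq_abs, abs_mul,
      abs_of_pos (Real.rpow_pos_of_pos (ha.trans ht.1) _)]
    exact mul_le_mul_of_nonneg_left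
      (Real.rpow_le_rpow_of_nonpos ha ht.1.le (by linarith)) (abs_nonneg α)

lemma rpow_mul_eLpNorm_indicator_deriv_rpow_le {α a p r' : ℝ} (hα : α ≤ 1) (ha : 0 < a)
    (hp : 0 < p) :
    (ENNReal.ofReal (a ^ r'⁻¹) *
        eLpNorm ((Ioc a (2 * a)).indicator fun t : ℝ => ((α * t ^ (α - 1) : ℝ) : ℂ))
          (ENNReal.ofReal p) mu01) ^ p
      ≤ ENNReal.ofReal ((|α| * a ^ (r'⁻¹ + α - 1 + p⁻¹)) ^ p) := by
  have hexp :
      a ^ r'⁻¹ * (a ^ p⁻¹ * (|α| * a ^ (α - 1))) = |α| * a ^ (r'⁻¹ + α - 1 + p⁻¹) := by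
    rw [show r'⁻¹ + α - 1 + p⁻¹ = r'⁻¹ + p⁻¹ + (α - 1) by ring, Real.rpow_add ha,
      Real.rpow_add ha]
    ring
  calc _ ≤ (ENNReal.ofReal (a ^ r'⁻¹) *
        (ENNReal.ofReal (2 * a - a) ^ p⁻¹ * ENNReal.ofReal (|α| * a ^ (α - 1)))) ^ p := by
        gcongr
        exact eLpNorm_indicator_deriv_rpow_le hα ha hp
    _ = ENNReal.ofReal ((|α| * a ^ (r'⁻¹ + α - 1 + p⁻¹)) ^ p) := by
        rw [two_mul, add_sub_cancel_right, ENNReal.ofReal_rpow_of_pos ha,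
          ← ENNReal.ofReal_mul (by positivity), ← ENNReal.ofReal_mul (by positivity), hexp,
          ENNReal.ofReal_rpow_of_nonneg (by positivity) hp.le]

theorem tsum_dyadic_eLpNorm_deriv_rpow_lt_top {α p r' : ℝ} (hα : α ≤ 1) (hp : 0 < p)
    (hκ : 0 < r'⁻¹ + α - 1 + p⁻¹) :
    (∑' n : ℕ, (ENNReal.ofReal ((2 : ℝ) ^ (-((n : ℝ) + 1) / r')) *
        eLpNorm ((Ioc ((2 : ℝ) ^ (-((n : ℝ) + 1))) ((2 : ℝ) ^ (-(n : ℝ)))).indicator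
            (fun t : ℝ => ((α * t ^ (α - 1) : ℝ) : ℂ))) (ENNReal.ofReal p) mu01) ^ p) < ⊤ := by
  set κ := r'⁻¹ + α - 1 + p⁻¹
  set x : ℝ := 2 ^ (-(κ * p))
  have hx : x < 1 := Real.rpow_lt_one_of_one_lt_of_neg one_lt_two
    (neg_neg_of_pos (mul_pos hκ hp))
  have hblock (n : ℕ) : (ENNReal.ofReal ((2 : ℝ) ^ (-((n : ℝ) + 1) / r')) *
        eLpNorm ((Ioc ((2 : ℝ) ^ (-((n : ℝ) + 1))) ((2 : ℝ) ^ (-(n : ℝ)))).indicator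
            (fun t : ℝ => ((α * t ^ (α - 1) : ℝ) : ℂ))) (ENNReal.ofReal p) mu01) ^ p
      ≤ ENNReal.ofReal (|α| ^ p * x * x ^ n) := by
    have ha : (0 : ℝ) < 2 ^ (-((n : ℝ) + 1)) := by positivity
    have hb : (2 : ℝ) ^ (-(n : ℝ)) = 2 * 2 ^ (-((n : ℝ) + 1)) := by
      rw [show -(n : ℝ) = 1 + -((n : ℝ) + 1) by ring, Real.rpow_add two_pos, Real.rpow_one]
    have hpow : ((2 : ℝ) ^ (-((n : ℝ) + 1))) ^ (κ * p) = x * x ^ n := by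
      rw [← pow_succ', ← Real.rpow_natCast, ← Real.rpow_mul zero_le_two,
        ← Real.rpow_mul zero_le_two]
      push_cast; ring_nf
    rw [hb, div_eq_mul_inv, Real.rpow_mul zero_le_two]
    refine (rpow_mul_eLpNorm_indicator_deriv_rpow_le hα ha hp).trans_eq ?_
    rw [Real.mul_rpow (abs_nonneg α) (by positivity), ← Real.rpow_mul ha.le, hpow, mul_assoc]
  refine (ENNReal.tsum_le_tsum hblock).trans_lt ?_
  rw [← ENNReal.ofReal_tsum_of_nonneg (fun n => by positivity)
    ((summable_geometric_of_lt_one (by positivity) hx).mul_left _)]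
  exact ENNReal.ofReal_lt_top

lemma integral_norm_Ioc_le_eLpNorm_mul_rpow {E : Type*} [NormedAddCommGroup E] {f : ℝ → E}
    {q : ℝ≥0∞} (hq : 1 ≤ q) (hf : MemLp f q mu01) {u : ℝ} (hu : u ∈ Icc (0 : ℝ) 1) :
    ∫ s in Ioc 0 u, ‖f s‖ ≤ (eLpNorm f q mu01).toReal * u ^ (1 - q.toReal⁻¹) := by
  have hq' : q.toReal⁻¹ ≤ 1 := by
    rcases eq_or_ne q ⊤ with rfl | hqtop
    · simp
    · exact inv_le_one_of_one_le₀ (by simpa using ENNReal.toReal_mono hqtop hq)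
  have hμu : volume.restrict (Ioc 0 u) ≤ mu01 :=
    Measure.restrict_mono (fun _ hs => ⟨hs.1.le, hs.2.trans hu.2⟩ : Ioc 0 u ⊆ Icc 0 1) le_rfl
  have hf' : AEStronglyMeasurable f (volume.restrict (Ioc 0 u)) := hf.1.mono_measure hμu
  have holder : eLpNorm f 1 (volume.restrict (Ioc 0 u)) ≤
      eLpNorm f q mu01 * ENNReal.ofReal (u ^ (1 - q.toReal⁻¹)) := by
    refine (eLpNorm_le_eLpNorm_mul_rpow_measure_univ hq hf').trans ?_
    rw [Measure.restrict_apply_univ, Real.volume_Ioc, sub_zero, ENNReal.toReal_one, one_div,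
      one_div, inv_one, ENNReal.ofReal_rpow_of_nonneg hu.1 (sub_nonneg.2 hq')]
    gcongr
  rw [integral_norm_eq_lintegral_enorm hf', ← eLpNorm_one_eq_lintegral_enorm]
  refine (ENNReal.toReal_mono ?_ holder).trans_eq ?_
  · exact ENNReal.mul_ne_top hf.eLpNorm_ne_top ENNReal.ofReal_ne_top
  · rw [ENNReal.toReal_mul, ENNReal.toReal_ofReal (Real.rpow_nonneg hu.1 _)]

/-- Integration by parts against a primitive, by Fubini on the triangle `{s ≤ u}`. -/
theorem integral_mul_primitive_eq_integral_sub_mul {φ φ' g' : ℝ → ℂ} {a t : ℝ}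
    (hφ : ∀ s ∈ Ioc a t, ∫ u in s..t, φ' u = φ t - φ s)
    (hφ' : AEStronglyMeasurable φ' (volume.restrict (Ioc a t)))
    (hg' : IntegrableOn g' (Ioc a t))
    (hdom : IntegrableOn (fun u => ‖φ' u‖ * ∫ s in Ioc a u, ‖g' s‖) (Ioc a t)) :
    ∫ u in Ioc a t, φ' u * ∫ s in Ioc a u, g' s = ∫ s in Ioc a t, (φ t - φ s) * g' s := by
  set μ := volume.restrict (Ioc a t)
  set F : ℝ × ℝ → ℂ := {q | q.2 ≤ q.1}.indicator fun q => φ' q.1 * g' q.2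
  have hF_apply_Iic (u s : ℝ) : F (u, s) = (Iic u).indicator (fun s => φ' u * g' s) s := by
    simp [F, indicator_apply]
  have hF_apply_Ici (u s : ℝ) : F (u, s) = (Ici s).indicator (fun u => φ' u * g' s) u := by
    simp [F, indicator_apply]
  have hF_meas : AEStronglyMeasurable F (μ.prod μ) :=
    ((hφ'.comp_quasiMeasurePreserving Measure.quasiMeasurePreserving_fst).mul
      (hg'.aestronglyMeasurable.comp_quasiMeasurePreserving
        Measure.quasiMeasurePreserving_snd)).indicator
      (measurableSet_le measurable_snd measurable_fst)
  have hinner (u : ℝ) (hu : u ∈ Ioc a t) :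
      ∫ s, F (u, s) ∂μ = ∫ s in Ioc a u, φ' u * g' s := by
    simp only [hF_apply_Iic]
    rw [setIntegral_indicator measurableSet_Iic, Ioc_inter_Iic, min_eq_right hu.2]
  have hF_int : Integrable F (μ.prod μ) := by
    refine (integrable_prod_iff hF_meas).2 ⟨.of_forall fun u => ?_, ?_⟩
    · simp only [hF_apply_Iic]
      exact (hg'.const_mul _).indicator measurableSet_Iic
    · refine hdom.congr ((ae_restrict_iff' measurableSet_Ioc).2 (.of_forall fun u hu => ?_))
      simp only [hF_apply_Iic, norm_indicator_eq_indicator_norm, norm_mul]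
      rw [setIntegral_indicator measurableSet_Iic, Ioc_inter_Iic, min_eq_right hu.2,
        integral_const_mul]
  have hIcc (s : ℝ) (hs : s ∈ Ioc a t) : Ioc a t ∩ Ici s = Icc s t :=
    ext fun u => ⟨fun h => ⟨h.2, h.1.2⟩, fun h => ⟨⟨hs.1.trans_le h.1, h.2⟩, h.1⟩⟩
  calc ∫ u in Ioc a t, φ' u * ∫ s in Ioc a u, g' s = ∫ u, ∫ s, F (u, s) ∂μ ∂μ :=
        setIntegral_congr_fun measurableSet_Ioc fun u hu => by
          rw [hinner u hu, integral_const_mul]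
    _ = ∫ s, ∫ u, F (u, s) ∂μ ∂μ := integral_integral_swap hF_int
    _ = ∫ s in Ioc a t, (φ t - φ s) * g' s :=
        setIntegral_congr_fun measurableSet_Ioc fun s hs => by
          simp only [hF_apply_Ici]
          rw [setIntegral_indicator measurableSet_Ici, hIcc s hs, integral_mul_const,
            integral_Icc_eq_integral_Ioc, ← intervalIntegral.integral_of_le hs.2, hφ s hs]

lemma integral_ofReal_deriv_rpow {α s t : ℝ} (hs : 0 < s) (hst : s ≤ t) :
    ∫ u in s..t, ((α * u ^ (α - 1) : ℝ) : ℂ) = ((t ^ α : ℝ) : ℂ) - ((s ^ α : ℝ) : ℂ) := by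
  have hpos (u : ℝ) (hu : u ∈ uIcc s t) : u ≠ 0 := by
    rw [uIcc_of_le hst] at hu; exact (hs.trans_le hu.1).ne'
  rw [intervalIntegral.integral_ofReal, ← Complex.ofReal_sub]
  congr 1
  refine intervalIntegral.integral_eq_sub_of_hasDerivAt
    (fun u hu => Real.hasDerivAt_rpow_const (Or.inl (hpos u hu))) ?_
  exact ContinuousOn.intervalIntegrable fun u hu =>
    ((Real.continuousAt_rpow_const _ _ (Or.inl (hpos u hu))).const_mul α).continuousWithinAt

lemma memLp_rpow_mul {α p r : ℝ} (hp : 0 < p) (hpr : p < r) (hα : r⁻¹ - p⁻¹ < α) {f : ℝ → ℂ}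
    (hf : MemLp f (ENNReal.ofReal r) mu01) :
    MemLp (fun t => ((t ^ α : ℝ) : ℂ) * f t) (ENNReal.ofReal p) mu01 := by
  have hr : 0 < r := hp.trans hpr
  have hw : 0 < p⁻¹ - r⁻¹ := sub_pos.2 (inv_strictAnti₀ hp hpr)
  have : ENNReal.HolderTriple (ENNReal.ofReal (p⁻¹ - r⁻¹)⁻¹) (ENNReal.ofReal r)
      (ENNReal.ofReal p) := ⟨by
    rw [← ENNReal.ofReal_inv_of_pos (inv_pos.2 hw), ← ENNReal.ofReal_inv_of_pos hr,
      ← ENNReal.ofReal_inv_of_pos hp, inv_inv, ← ENNReal.ofReal_add hw.le (inv_pos.2 hr).le,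
      sub_add_cancel]⟩
  exact hf.smul (memLp_ofReal_rpow (inv_pos.2 hw) (by
    rw [← div_eq_mul_inv, lt_div_iff₀ hw]; linarith))

lemma norm_deriv_rpow_mul_integral_norm_le {α r : ℝ} (hr : 1 ≤ r) {f : ℝ → ℂ}
    (hf : MemLp f (ENNReal.ofReal r) mu01) {u : ℝ} (hu : u ∈ Ioc (0 : ℝ) 1) :
    ‖((α * u ^ (α - 1) : ℝ) : ℂ)‖ * ∫ s in Ioc 0 u, ‖f s‖ ≤
      |α| * (eLpNorm f (ENNReal.ofReal r) mu01).toReal * u ^ (α - r⁻¹) := by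
  have hprim :=
    integral_norm_Ioc_le_eLpNorm_mul_rpow (by simpa using hr) hf (Ioc_subset_Icc_self hu)
  rw [ENNReal.toReal_ofReal (by linarith)] at hprim
  rw [Complex.norm_real, Real.norm_eq_abs, abs_mul, abs_of_pos (Real.rpow_pos_of_pos hu.1 _)]
  calc |α| * u ^ (α - 1) * ∫ s in Ioc 0 u, ‖f s‖
      ≤ |α| * u ^ (α - 1) * ((eLpNorm f (ENNReal.ofReal r) mu01).toReal * u ^ (1 - r⁻¹)) :=
        mul_le_mul_of_nonneg_left hprim
          (mul_nonneg (abs_nonneg α) (Real.rpow_nonneg hu.1.le _))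
    _ = |α| * (eLpNorm f (ENNReal.ofReal r) mu01).toReal * u ^ (α - r⁻¹) := by
        rw [show α - r⁻¹ = α - 1 + (1 - r⁻¹) by ring, Real.rpow_add hu.1]; ring

lemma memLp_deriv_rpow_mul_primitive {α p r : ℝ} (hp : 0 < p) (hr : 1 ≤ r)
    (hα : r⁻¹ - p⁻¹ < α) {g g' : ℝ → ℂ} (hg' : MemLp g' (ENNReal.ofReal r) mu01)
    (hg : ∀ t ∈ Icc (0 : ℝ) 1, g t = ∫ s in Ioc 0 t, g' s) :
    MemLp (fun t => ((α * t ^ (α - 1) : ℝ) : ℂ) * g t) (ENNReal.ofReal p) mu01 := by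
  have hexp : -1 < (α - r⁻¹) * p := by
    have := inv_mul_cancel₀ hp.ne'; nlinarith
  have hg_cont : ContinuousOn g (Icc 0 1) :=
    (intervalIntegral.continuousOn_primitive (hg'.integrable (by simpa using hr))).congr hg
  have hm' : Measurable fun t : ℝ => ((α * t ^ (α - 1) : ℝ) : ℂ) := by fun_prop
  refine memLp_of_norm_le_rpow (C := |α| * (eLpNorm g' (ENNReal.ofReal r) mu01).toReal) hp hexp
    (hm'.aestronglyMeasurable.mul (hg_cont.aestronglyMeasurable measurableSet_Icc))
    fun u hu => ?_
  refine (norm_mul_le _ _).trans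
    (le_trans ?_ (norm_deriv_rpow_mul_integral_norm_le hr hg' hu))
  rw [hg u (Ioc_subset_Icc_self hu)]
  gcongr
  exact norm_integral_le_integral_norm _

lemma integrableOn_norm_deriv_rpow_mul_integral_norm {α r t : ℝ} (hr : 1 ≤ r)
    (hα : r⁻¹ - 1 < α) {f : ℝ → ℂ} (hf : MemLp f (ENNReal.ofReal r) mu01) (ht : t ≤ 1) :
    IntegrableOn (fun u => ‖((α * u ^ (α - 1) : ℝ) : ℂ)‖ * ∫ s in Ioc 0 u, ‖f s‖)
      (Ioc 0 t) := by
  have hm' : Measurable fun u : ℝ => ((α * u ^ (α - 1) : ℝ) : ℂ) := by fun_prop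
  have hsub : Ioc 0 t ⊆ Ioc 0 1 := Ioc_subset_Ioc_right ht
  have hprim : ContinuousOn (fun u => ∫ s in Ioc 0 u, ‖f s‖) (Icc 0 1) :=
    intervalIntegral.continuousOn_primitive (hf.integrable (by simpa using hr)).norm
  refine Integrable.mono'
    (IntegrableOn.mono_set ((integrableOn_Ioc_rpow (by linarith : -1 < α - r⁻¹)).const_mul
      (|α| * (eLpNorm f (ENNReal.ofReal r) mu01).toReal)) hsub)
    (hm'.aestronglyMeasurable.norm.mul
      ((hprim.mono (hsub.trans Ioc_subset_Icc_self)).aestronglyMeasurable measurableSet_Ioc))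
    ((ae_restrict_iff' measurableSet_Ioc).2 (.of_forall fun u hu => ?_))
  rw [Real.norm_of_nonneg (by positivity)]
  exact norm_deriv_rpow_mul_integral_norm_le hr hf (hsub hu)

theorem integral_deriv_rpow_mul_add_integral_rpow_mul {α t : ℝ} (ht : 0 < t) {g g' : ℝ → ℂ}
    (hg : ∀ u ∈ Ioc 0 t, g u = ∫ s in Ioc 0 u, g' s) (hg' : IntegrableOn g' (Ioc 0 t))
    (hmg' : IntegrableOn (fun s => ((s ^ α : ℝ) : ℂ) * g' s) (Ioc 0 t))
    (hdom : IntegrableOn (fun u => ‖((α * u ^ (α - 1) : ℝ) : ℂ)‖ * ∫ s in Ioc 0 u, ‖g' s‖)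
      (Ioc 0 t)) :
    (∫ s in Ioc 0 t, ((α * s ^ (α - 1) : ℝ) : ℂ) * g s) +
        ∫ s in Ioc 0 t, ((s ^ α : ℝ) : ℂ) * g' s = ((t ^ α : ℝ) : ℂ) * g t := by
  set m : ℝ → ℂ := fun t => ((t ^ α : ℝ) : ℂ)
  have hparts := integral_mul_primitive_eq_integral_sub_mul (φ := m)
    (fun s hs => integral_ofReal_deriv_rpow hs.1 hs.2) (by fun_prop) hg' hdom
  rw [setIntegral_congr_fun measurableSet_Ioc fun u hu => by rw [hg u hu], hparts]
  simp_rw [sub_mul]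
  rw [integral_sub (hg'.const_mul _) hmg', integral_const_mul, sub_add_cancel,
    hg t (right_mem_Ioc.2 ht)]

theorem exists_memLp_integral_eq_rpow_mul {α p r : ℝ} (hp : 1 ≤ p) (hpr : p < r)
    (hα : r⁻¹ - p⁻¹ < α) {g g' : ℝ → ℂ} (hg' : MemLp g' (ENNReal.ofReal r) mu01)
    (hg : ∀ t ∈ Icc (0 : ℝ) 1, g t = ∫ s in Ioc 0 t, g' s) :
    ∃ D : ℝ → ℂ, MemLp D (ENNReal.ofReal p) mu01 ∧ ∀ t ∈ Icc (0 : ℝ) 1,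
      (if t = 0 then 0 else ((t ^ α : ℝ) : ℂ) * g t) = ∫ s in Ioc 0 t, D s := by
  have hr : 1 ≤ r := by linarith
  have hp' : 1 ≤ ENNReal.ofReal p := by simpa using hp
  have hm'g := memLp_deriv_rpow_mul_primitive (by linarith) hr hα hg' hg
  have hmg' := memLp_rpow_mul (by linarith) hpr hα hg'
  set D : ℝ → ℂ := fun s => ((α * s ^ (α - 1) : ℝ) : ℂ) * g s + ((s ^ α : ℝ) : ℂ) * g' s
  refine ⟨(Ioc 0 1).indicator D, (hm'g.add hmg').indicator measurableSet_Ioc, fun t ht => ?_⟩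
  rcases ht.1.eq_or_lt with rfl | ht0
  · simp
  have hsub : Ioc 0 t ⊆ Ioc 0 1 := Ioc_subset_Ioc_right ht.2
  have hon {f : ℝ → ℂ} (hf : Integrable f mu01) : IntegrableOn f (Ioc 0 t) := by
    rw [mu01_eq_restrict_Ioc] at hf
    exact IntegrableOn.mono_set hf hsub
  rw [if_neg ht0.ne', setIntegral_congr_fun measurableSet_Ioc fun s hs =>
      indicator_of_mem (hsub hs) D,
    integral_add (hon (hm'g.integrable hp')) (hon (hmg'.integrable hp'))]
  exact (integral_deriv_rpow_mul_add_integral_rpow_mul ht0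
    (fun u hu => hg u ⟨hu.1.le, hu.2.trans ht.2⟩) (hon (hg'.integrable (by simpa using hr)))
    (hon (hmg'.integrable hp'))
    (integrableOn_norm_deriv_rpow_mul_integral_norm hr
      (by linarith [inv_le_one_of_one_le₀ hp]) hg' ht.2)).symm

/-- The dyadic blocks are indexed by `n : ℕ`, standing for the paper's `n + 1`. -/
theorem example_multiplier_rpow
    (p r v r' δ : ℝ) (hp : 1 < p) (hpr : p < r)
    (hv : v⁻¹ = p⁻¹ - r⁻¹) (hr' : r⁻¹ + r'⁻¹ = 1)
    (hδ0 : 0 < δ) (hδv : δ < v⁻¹) :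
    MemLp (fun t : ℝ => ((t ^ (-v⁻¹ + δ) : ℝ) : ℂ)) (ENNReal.ofReal v) mu01 ∧
    (∑' n : ℕ,
      (ENNReal.ofReal ((2 : ℝ) ^ (-((n : ℝ) + 1) / r')) *
        eLpNorm ((Set.Ioc ((2 : ℝ) ^ (-((n : ℝ) + 1))) ((2 : ℝ) ^ (-(n : ℝ)))).indicator
            (fun t : ℝ => (((-v⁻¹ + δ) * t ^ (-v⁻¹ + δ - 1) : ℝ) : ℂ)))
          (ENNReal.ofReal p) mu01) ^ p < ⊤) ∧
    (∀ g g' : ℝ → ℂ, MemLp g' (ENNReal.ofReal r) mu01 →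
      (∀ t ∈ Set.Icc (0 : ℝ) 1, g t = ∫ s in Set.Ioc (0 : ℝ) t, g' s) →
      ∃ D : ℝ → ℂ, MemLp D (ENNReal.ofReal p) mu01 ∧
        ∀ t ∈ Set.Icc (0 : ℝ) 1,
          (if t = 0 then 0 else ((t ^ (-v⁻¹ + δ) : ℝ) : ℂ) * g t) =
            ∫ s in Set.Ioc (0 : ℝ) t, D s) := by
  have hp0 : 0 < p := by linarith
  have hv0 : 0 < v := by
    rw [← inv_pos, hv]; exact sub_pos.2 (inv_strictAnti₀ hp0 hpr)
  have hmem : -1 < (-v⁻¹ + δ) * v := by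
    rw [add_mul, neg_mul, inv_mul_cancel₀ hv0.ne']; nlinarith
  refine ⟨memLp_ofReal_rpow hv0 hmem,
    tsum_dyadic_eLpNorm_deriv_rpow_lt_top (by linarith) hp0 (by linarith),
    fun g g' hg' hg => exists_memLp_integral_eq_rpow_mul hp.le hpr (by linarith) hg' hg⟩
end

section
/- Let r > p > 1, define v by 1/v = 1/p − 1/r, and let m(t) = t^{−1/v} for t ∈ (0,1], so that m'(t) = −(1/v) t^{−1/v−1}. Then m ∉ L^v(0,1] and Σ_{n=1}^∞ (2^{−n/r'} ‖m'·χ_{(2^{−n},2^{−n+1}]}‖_p)^p = ∞, yet there is a constant C such that (∫_ε^1 |m'(t)|^p dt)^{1/p} ≤ C·ε^{−1/r'} for all ε ∈ (0,1]. Thus m satisfies the necessary growth condition of the multiplier theorem for AC_r → AC_p but fails the sufficient summability condition. -/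
/-!
Put `q = p / r'`; the relation `1/v = 1/p - 1/r` makes `|m'|^p` a multiple of `t^(-q-1)`.
Since `∫_a^{2a} t^(-q-1) dt` scales like `a^(-q)`, the weight `2^(-np/r')` cancels it exactly,
so every term of the series is the same positive constant; on the other hand
`∫_ε^1 t^(-q-1) dt ≤ ε^(-q)/q`, which is the growth bound after taking `p`-th roots.
Finally `|m|^v = 1/t` is not integrable at `0`.
-/

open MeasureTheory Set
open scoped ENNReal NNReal

lemma lintegral_Ioc_ofReal_rpow {a b s : ℝ} (ha : 0 < a) (hab : a ≤ b) (hs : s ≠ -1) :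
    ∫⁻ t in Ioc a b, ENNReal.ofReal (t ^ s) =
      ENNReal.ofReal ((b ^ (s + 1) - a ^ (s + 1)) / (s + 1)) := by
  have h0 : (0 : ℝ) ∉ uIcc a b := by
    rw [uIcc_of_le hab]
    exact fun h => ha.not_ge h.1
  have hint : IntegrableOn (fun t : ℝ => t ^ s) (Ioc a b) := by
    rw [← intervalIntegrable_iff_integrableOn_Ioc_of_le hab]
    exact intervalIntegral.intervalIntegrable_rpow (Or.inr h0)
  have hnn : 0 ≤ᵐ[volume.restrict (Ioc a b)] fun t : ℝ => t ^ s := by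
    filter_upwards [ae_restrict_mem measurableSet_Ioc] with t ht
    exact Real.rpow_nonneg (ha.trans ht.1).le s
  rw [← ofReal_integral_eq_lintegral_ofReal hint hnn, ← intervalIntegral.integral_of_le hab,
    integral_rpow (Or.inr ⟨hs, h0⟩)]

lemma eLpNorm_restrict_Ioc_const_mul_rpow_rpow {a b c s p : ℝ} (hp : 0 < p) (ha : 0 < a)
    (hab : a ≤ b) (hs : s * p ≠ -1) :
    eLpNorm (fun t : ℝ => ((c * t ^ s : ℝ) : ℂ)) (ENNReal.ofReal p)
        (volume.restrict (Ioc a b)) ^ p =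
      ENNReal.ofReal (|c| ^ p * ((b ^ (s * p + 1) - a ^ (s * p + 1)) / (s * p + 1))) := by
  have hintegrand : ∀ t ∈ Ioc a b, ‖((c * t ^ s : ℝ) : ℂ)‖ₑ ^ p =
      ENNReal.ofReal (|c| ^ p) * ENNReal.ofReal (t ^ (s * p)) := by
    intro t ht
    have ht0 : 0 ≤ t := (ha.trans ht.1).le
    rw [← ofReal_norm, Complex.norm_real, Real.norm_eq_abs, abs_mul,
      abs_of_nonneg (Real.rpow_nonneg ht0 s), ENNReal.ofReal_rpow_of_nonneg (by positivity) hp.le,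
      Real.mul_rpow (abs_nonneg c) (Real.rpow_nonneg ht0 s), ← Real.rpow_mul ht0,
      ENNReal.ofReal_mul (by positivity)]
  rw [eLpNorm_eq_lintegral_rpow_enorm_toReal (by simpa using hp) ENNReal.ofReal_ne_top,
    ENNReal.toReal_ofReal hp.le, ← ENNReal.rpow_mul, one_div_mul_cancel hp.ne', ENNReal.rpow_one,
    setLIntegral_congr_fun measurableSet_Ioc hintegrand,
    lintegral_const_mul' _ _ ENNReal.ofReal_ne_top, lintegral_Ioc_ofReal_rpow ha hab hs,
    ← ENNReal.ofReal_mul (by positivity)]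

lemma eLpNorm_indicator_mu01 {E : Type*} [NormedAddCommGroup E] {S : Set ℝ}
    (hS : MeasurableSet S) (hS01 : S ⊆ Icc 0 1) (f : ℝ → E) (q : ℝ≥0∞) :
    eLpNorm (S.indicator f) q mu01 = eLpNorm f q (volume.restrict S) := by
  rw [eLpNorm_indicator_eq_eLpNorm_restrict hS, mu01, Measure.restrict_restrict hS,
    inter_eq_left.mpr hS01]

lemma not_memLp_rpow_neg_inv {v : ℝ} (hv : 0 < v) :
    ¬ MemLp (fun t : ℝ => ((t ^ (-v⁻¹) : ℝ) : ℂ)) (ENNReal.ofReal v) mu01 := by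
  intro hmem
  have hint := hmem.integrable_norm_rpow (by simpa using hv) ENNReal.ofReal_ne_top
  rw [ENNReal.toReal_ofReal hv.le, mu01] at hint
  have hIoo : IntegrableOn (fun t : ℝ => ‖((t ^ (-v⁻¹) : ℝ) : ℂ)‖ ^ v) (Ioo 0 1) :=
    IntegrableOn.mono_set hint Ioo_subset_Icc_self
  have heq : EqOn (fun t : ℝ => ‖((t ^ (-v⁻¹) : ℝ) : ℂ)‖ ^ v) (fun t => t ^ (-1 : ℝ)) (Ioo 0 1) := by
    intro t ht
    dsimp only
    rw [Complex.norm_real, Real.norm_eq_abs, abs_of_nonneg (Real.rpow_nonneg ht.1.le _),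
      ← Real.rpow_mul ht.1.le, neg_mul, inv_mul_cancel₀ hv.ne']
  have := (intervalIntegral.integrableOn_Ioo_rpow_iff one_pos).mp
    (hIoo.congr_fun heq measurableSet_Ioo)
  norm_num at this

lemma rpow_mul_rpow_two_mul_sub_div_neg {a q : ℝ} (ha : 0 < a) :
    a ^ q * (((2 * a) ^ (-q) - a ^ (-q)) / (-q)) = (1 - 2 ^ (-q)) / q := by
  have hcancel : a ^ q * a ^ (-q) = 1 := by
    rw [Real.rpow_neg ha.le, mul_inv_cancel₀ (Real.rpow_pos_of_pos ha q).ne']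
  rw [Real.mul_rpow zero_le_two ha.le, mul_div_assoc', ← sub_one_mul, mul_comm _ (a ^ (-q)),
    ← mul_assoc, hcancel, one_mul, div_neg, ← neg_div, neg_sub]

lemma dyadic_block_weighted_eLpNorm_rpow {c s p r' : ℝ} (hp : 0 < p) (hr' : 0 < r')
    (hs : s * p + 1 = -(p / r')) (n : ℕ) :
    (ENNReal.ofReal ((2 : ℝ) ^ (-((n : ℝ) + 1) / r')) *
        eLpNorm ((Ioc ((2 : ℝ) ^ (-((n : ℝ) + 1))) ((2 : ℝ) ^ (-(n : ℝ)))).indicator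
            (fun t : ℝ => ((c * t ^ s : ℝ) : ℂ))) (ENNReal.ofReal p) mu01) ^ p =
      ENNReal.ofReal (|c| ^ p * ((1 - 2 ^ (-(p / r'))) / (p / r'))) := by
  set a : ℝ := 2 ^ (-((n : ℝ) + 1))
  have hq : 0 < p / r' := div_pos hp hr'
  have ha : 0 < a := by positivity
  have hb : (2 : ℝ) ^ (-(n : ℝ)) = 2 * a := by
    rw [mul_comm, ← Real.rpow_add_one two_ne_zero]
    ring_nf
  have hb1 : 2 * a ≤ 1 := hb ▸ Real.rpow_le_one_of_one_le_of_nonpos one_le_two (by simp)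
  have hweight : ((2 : ℝ) ^ (-((n : ℝ) + 1) / r')) ^ p = a ^ (p / r') := by
    rw [← Real.rpow_mul zero_le_two, ← Real.rpow_mul zero_le_two]; ring_nf
  rw [hb, eLpNorm_indicator_mu01 measurableSet_Ioc
      (Ioc_subset_Icc_self.trans (Icc_subset_Icc ha.le hb1)),
    ENNReal.mul_rpow_of_nonneg _ _ hp.le,
    eLpNorm_restrict_Ioc_const_mul_rpow_rpow hp ha (by linarith) (by linarith [hs]), hs,
    ENNReal.ofReal_rpow_of_nonneg (by positivity) hp.le, hweight,
    ← ENNReal.ofReal_mul (by positivity), mul_left_comm, rpow_mul_rpow_two_mul_sub_div_neg ha]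

lemma tsum_dyadic_block_weighted_eLpNorm_rpow_eq_top {c s p r' : ℝ} (hp : 0 < p) (hr' : 0 < r')
    (hc : c ≠ 0) (hs : s * p + 1 = -(p / r')) :
    ∑' n : ℕ, (ENNReal.ofReal ((2 : ℝ) ^ (-((n : ℝ) + 1) / r')) *
        eLpNorm ((Ioc ((2 : ℝ) ^ (-((n : ℝ) + 1))) ((2 : ℝ) ^ (-(n : ℝ)))).indicator
            (fun t : ℝ => ((c * t ^ s : ℝ) : ℂ))) (ENNReal.ofReal p) mu01) ^ p = ⊤ := by
  have hq : 0 < p / r' := div_pos hp hr'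
  have h2q : (2 : ℝ) ^ (-(p / r')) < 1 := Real.rpow_lt_one_of_one_lt_of_neg one_lt_two (by linarith)
  rw [tsum_congr (dyadic_block_weighted_eLpNorm_rpow hp hr' hs)]
  refine ENNReal.tsum_const_eq_top_of_ne_zero (ENNReal.ofReal_pos.mpr ?_).ne'
  exact mul_pos (Real.rpow_pos_of_pos (abs_pos.mpr hc) p) (div_pos (by linarith) hq)

lemma exists_eLpNorm_indicator_Icc_le {c s p r' : ℝ} (hp : 0 < p) (hr' : 0 < r')
    (hs : s * p + 1 = -(p / r')) :
    ∃ C : ℝ, ∀ ε ∈ Ioc (0 : ℝ) 1,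
      eLpNorm ((Icc ε 1).indicator (fun t : ℝ => ((c * t ^ s : ℝ) : ℂ))) (ENNReal.ofReal p) mu01
        ≤ ENNReal.ofReal (C * ε ^ (-r'⁻¹)) := by
  set q := p / r'
  have hq : 0 < q := div_pos hp hr'
  refine ⟨(|c| ^ p / q) ^ p⁻¹, fun ε ⟨hε0, hε1⟩ => ?_⟩
  have hK : 0 ≤ |c| ^ p / q := by positivity
  rw [← ENNReal.rpow_le_rpow_iff hp, eLpNorm_indicator_mu01 measurableSet_Icc
      (Icc_subset_Icc_left hε0.le), ← restrict_Ioc_eq_restrict_Icc,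
    eLpNorm_restrict_Ioc_const_mul_rpow_rpow hp hε0 hε1 (by linarith [hs]), hs,
    ENNReal.ofReal_rpow_of_nonneg (by positivity) hp.le,
    Real.mul_rpow (by positivity) (by positivity), Real.rpow_inv_rpow hK hp.ne',
    ← Real.rpow_mul hε0.le, show -r'⁻¹ * p = -q by ring]
  refine ENNReal.ofReal_le_ofReal ?_
  rw [Real.one_rpow, div_neg, ← neg_div, neg_sub, mul_div_assoc', div_mul_eq_mul_div]
  gcongr
  linarith [Real.rpow_nonneg hε0.le (-q)]

/-- Example 2, first part.  Let `r > p > 1` (real exponents),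
`1/v = 1/p − 1/r`, `r'` the conjugate exponent of `r`, and `m t = t^{−1/v}`,
so `m' t = −(1/v) t^{−1/v−1}`.  Then `m ∉ L^v(0,1]` and
`Σ_{n≥1} (2^{−n/r'} ‖m'·χ_{(2^{−n},2^{−n+1}]}‖_p)^p = ∞` (blocks indexed by
`n : ℕ` ↔ paper's `n + 1`), yet `‖m'·χ_{[ε,1]}‖_p ≤ C ε^{−1/r'}` for some
constant `C`: `m` satisfies the necessary growth condition of Theorem 5 but not
the sufficient summability condition of Theorem 6. -/
theorem example_necessary_not_sufficient
    (p r v r' : ℝ) (hp : 1 < p) (hpr : p < r)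
    (hv : v⁻¹ = p⁻¹ - r⁻¹) (hr' : r⁻¹ + r'⁻¹ = 1) :
    ¬ MemLp (fun t : ℝ => ((t ^ (-v⁻¹) : ℝ) : ℂ)) (ENNReal.ofReal v) mu01 ∧
    (∑' n : ℕ,
      (ENNReal.ofReal ((2 : ℝ) ^ (-((n : ℝ) + 1) / r')) *
        eLpNorm ((Set.Ioc ((2 : ℝ) ^ (-((n : ℝ) + 1))) ((2 : ℝ) ^ (-(n : ℝ)))).indicator
            (fun t : ℝ => ((-v⁻¹ * t ^ (-v⁻¹ - 1) : ℝ) : ℂ)))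
          (ENNReal.ofReal p) mu01) ^ p = ⊤) ∧
    (∃ C : ℝ, ∀ ε ∈ Set.Ioc (0 : ℝ) 1,
      eLpNorm ((Set.Icc ε 1).indicator
          (fun t : ℝ => ((-v⁻¹ * t ^ (-v⁻¹ - 1) : ℝ) : ℂ)))
        (ENNReal.ofReal p) mu01 ≤ ENNReal.ofReal (C * ε ^ (-r'⁻¹))) := by
  have hp0 : 0 < p := one_pos.trans hp
  have hv0 : 0 < v := by
    rw [← inv_pos, hv, sub_pos]
    exact inv_strictAnti₀ hp0 hpr
  have hr'0 : 0 < r' := by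
    rw [← inv_pos]
    linarith [inv_lt_one_of_one_lt₀ (hp.trans hpr)]
  have hs : (-v⁻¹ - 1) * p + 1 = -(p / r') := by
    rw [hv, div_eq_mul_inv, eq_sub_of_add_eq' hr']
    field_simp
    ring
  exact ⟨not_memLp_rpow_neg_inv hv0,
    tsum_dyadic_block_weighted_eLpNorm_rpow_eq_top hp0 hr'0 (by simpa using hv0.ne') hs,
    exists_eLpNorm_indicator_Icc_le hp0 hr'0 hs⟩
end
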